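/- Let A = [[a,b],[c,d]] ∈ Sp(1,1) and let q₁, q₂ ∈ Δ_ℍ. Then c·qᵢ + d ≠ 0 and gᵢ := (a·qᵢ + b)·(c·qᵢ + d)⁻¹ ∈ Δ_ℍ for i = 1, 2, and δ(g₁, g₂) = δ(q₁, q₂). Moreover δ(conj(q₁), conj(q₂)) = δ(q₁, q₂). That is, the quaternionic Poincaré distance is invariant under all Möbius transformations of Δ_ℍ and under quaternionic conjugation. -/

import Mathlib

open scoped Quaternion

/-- The pseudo-hyperbolic ratio on the quaternionic unit disc. -/
noncomputable def rhoH (q₁ q₂ : ℍ[ℝ]) : ℝ := ‖q₁ - q₂‖ * ‖1 - star q₁ * q₂‖⁻¹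

/-- The quaternionic Poincaré distance on the unit disc. -/
noncomputable def deltaH (q₁ q₂ : ℍ[ℝ]) : ℝ :=
  (1 / 2) * Real.log ((1 + rhoH q₁ q₂) / (1 - rhoH q₁ q₂))

/-!
The `Sp(1,1)` condition says that `A` preserves the hermitian form `x̄₁x₂ - ȳ₁y₂` on `ℍ²`;
evaluated on the vectors `(qᵢ, 1)` this becomes
`star (c q₁ + d) * (1 - ḡ₁ g₂) * (c q₂ + d) = 1 - q̄₁ q₂`.
Since `ρ(x, y)² = 1 - (1 - |x|²)(1 - |y|²) / |1 - x̄ y|²`, and numerator and denominator of this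
ratio both pick up the factor `|c q₁ + d|² |c q₂ + d|²` under the transformation, `ρ` and hence `δ`
are invariant. The same formula for `ρ` is unchanged when both arguments are conjugated.
-/

open Quaternion

lemma norm_sq_one_sub_star_mul (x y : ℍ[ℝ]) :
    ‖1 - star x * y‖ ^ 2 = ‖x - y‖ ^ 2 + (1 - ‖x‖ ^ 2) * (1 - ‖y‖ ^ 2) := by
  simp only [sq, ← normSq_eq_norm_mul_self, normSq_def', re_sub, imI_sub, imJ_sub, imK_sub,
    re_one, imI_one, imJ_one, imK_one, re_mul, imI_mul, imJ_mul, imK_mul, re_star, imI_star,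
    imJ_star, imK_star]
  ring

lemma star_mul_self_eq_coe (x : ℍ[ℝ]) : star x * x = ((‖x‖ ^ 2 : ℝ) : ℍ[ℝ]) := by
  rw [star_mul_self, normSq_eq_norm_mul_self, sq]

lemma one_sub_star_mul_ne_zero {x y : ℍ[ℝ]} (hx : ‖x‖ < 1) (hy : ‖y‖ < 1) :
    1 - star x * y ≠ 0 := by
  intro h
  have hlt : ‖star x * y‖ < 1 := by
    rw [norm_mul, norm_star]
    nlinarith [norm_nonneg x, norm_nonneg y]
  rw [← sub_eq_zero.mp h, norm_one] at hlt
  exact hlt.false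

lemma rhoH_nonneg (x y : ℍ[ℝ]) : 0 ≤ rhoH x y := by
  unfold rhoH; positivity

lemma rhoH_sq {x y : ℍ[ℝ]} (h : 1 - star x * y ≠ 0) :
    rhoH x y ^ 2 = 1 - (1 - ‖x‖ ^ 2) * (1 - ‖y‖ ^ 2) / ‖1 - star x * y‖ ^ 2 := by
  have h' : ‖1 - star x * y‖ ^ 2 ≠ 0 := by positivity
  rw [rhoH, mul_pow, inv_pow, ← div_eq_mul_inv, eq_sub_iff_add_eq, ← add_div,
    ← norm_sq_one_sub_star_mul, div_self h']

lemma rhoH_star (x y : ℍ[ℝ]) : rhoH (star x) (star y) = rhoH x y := by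
  have hden : ‖1 - star (star x) * star y‖ = ‖1 - star x * y‖ := by
    rw [← sq_eq_sq₀ (norm_nonneg _) (norm_nonneg _), norm_sq_one_sub_star_mul,
      norm_sq_one_sub_star_mul, ← star_sub, norm_star, norm_star, norm_star]
  rw [rhoH, rhoH, hden, ← star_sub, norm_star]

noncomputable def moebius (a b c d q : ℍ[ℝ]) : ℍ[ℝ] := (a * q + b) * (c * q + d)⁻¹

/-- The entries of `Aᴴ * H * A = H` for `A = !![a, b; c, d]` and `H = diag(1, -1)`,
i.e. `A ∈ Sp(1,1)`. -/
structure IsSp11 (a b c d : ℍ[ℝ]) : Prop where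
  form_fst : star a * a - star c * c = 1
  form_fst_snd : star a * b - star c * d = 0
  form_snd : star b * b - star d * d = -1

namespace IsSp11

variable {a b c d : ℍ[ℝ]}

lemma of_conjTranspose_mul_mul
    (hA : (!![a, b; c, d]).conjTranspose * !![(1 : ℍ[ℝ]), 0; 0, -1] * !![a, b; c, d] =
      !![(1 : ℍ[ℝ]), 0; 0, -1]) : IsSp11 a b c d := by
  have h00 := congrFun₂ hA 0 0
  have h01 := congrFun₂ hA 0 1
  have h11 := congrFun₂ hA 1 1
  simp only [Fin.isValue, Matrix.mul_apply, Matrix.conjTranspose_apply, Matrix.of_apply,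
    Matrix.cons_val', Matrix.cons_val_zero, Matrix.cons_val_fin_one, Fin.sum_univ_two,
    Matrix.cons_val_one, mul_one, mul_zero, add_zero, mul_neg, zero_add, neg_mul] at h00 h01 h11
  exact ⟨by rwa [sub_eq_add_neg], by rwa [sub_eq_add_neg], by rwa [sub_eq_add_neg]⟩

lemma norm_sq_a_sub_norm_sq_c (hA : IsSp11 a b c d) : ‖a‖ ^ 2 - ‖c‖ ^ 2 = 1 := by
  have h := hA.form_fst
  rw [star_mul_self_eq_coe, star_mul_self_eq_coe, ← coe_sub, ← coe_one] at h
  exact coe_injective h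

lemma norm_sq_d_sub_norm_sq_b (hA : IsSp11 a b c d) : ‖d‖ ^ 2 - ‖b‖ ^ 2 = 1 := by
  have h := hA.form_snd
  rw [star_mul_self_eq_coe, star_mul_self_eq_coe, ← coe_sub, ← coe_one, ← coe_neg] at h
  linarith [coe_injective h]

lemma norm_a_mul_norm_b (hA : IsSp11 a b c d) : ‖a‖ * ‖b‖ = ‖c‖ * ‖d‖ := by
  have := congrArg norm (sub_eq_zero.mp hA.form_fst_snd)
  simpa [norm_mul, norm_star] using this

lemma norm_c_lt_norm_d (hA : IsSp11 a b c d) : ‖c‖ < ‖d‖ := by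
  have h₁ := hA.norm_sq_a_sub_norm_sq_c
  have h₂ := hA.norm_sq_d_sub_norm_sq_b
  have h₃ := hA.norm_a_mul_norm_b
  have hbc : ‖b‖ ^ 2 = ‖c‖ ^ 2 := by
    linear_combination (‖a‖ * ‖b‖ + ‖c‖ * ‖d‖) * h₃ - ‖b‖ ^ 2 * h₁ + ‖c‖ ^ 2 * h₂
  nlinarith [norm_nonneg c, norm_nonneg d]

lemma mul_add_ne_zero (hA : IsSp11 a b c d) {q : ℍ[ℝ]} (hq : ‖q‖ < 1) : c * q + d ≠ 0 := by
  intro h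
  have hd : ‖d‖ = ‖c‖ * ‖q‖ := by rw [eq_neg_of_add_eq_zero_right h, norm_neg, norm_mul]
  nlinarith [hA.norm_c_lt_norm_d, norm_nonneg c, norm_nonneg q]

lemma star_mul_sub_star_mul (hA : IsSp11 a b c d) (q₁ q₂ : ℍ[ℝ]) :
    star (c * q₁ + d) * (c * q₂ + d) - star (a * q₁ + b) * (a * q₂ + b) = 1 - star q₁ * q₂ := by
  have hcc : star c * c - star a * a = -1 := by rw [← hA.form_fst]; abel
  have hcd : star c * d - star a * b = 0 := by rw [← neg_eq_zero, ← hA.form_fst_snd]; abel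
  have hdc : star d * c - star b * a = 0 := by
    simpa only [star_sub, star_mul, star_star, star_zero] using congrArg star hcd
  have hdd : star d * d - star b * b = 1 := by rw [← neg_neg (1 : ℍ[ℝ]), ← hA.form_snd]; abel
  calc star (c * q₁ + d) * (c * q₂ + d) - star (a * q₁ + b) * (a * q₂ + b)
      = star q₁ * ((star c * c - star a * a) * q₂) + star q₁ * (star c * d - star a * b) +
        (star d * c - star b * a) * q₂ + (star d * d - star b * b) := by
        simp only [star_add, star_mul]; noncomm_ring
    _ = 1 - star q₁ * q₂ := by rw [hcc, hcd, hdc, hdd]; noncomm_ring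

lemma star_mul_one_sub_star_moebius_mul_moebius_mul (hA : IsSp11 a b c d) {q₁ q₂ : ℍ[ℝ]}
    (h₁ : c * q₁ + d ≠ 0) (h₂ : c * q₂ + d ≠ 0) :
    star (c * q₁ + d) * (1 - star (moebius a b c d q₁) * moebius a b c d q₂) * (c * q₂ + d) =
      1 - star q₁ * q₂ := by
  rw [← hA.star_mul_sub_star_mul q₁ q₂, moebius, moebius, star_mul, star_inv₀]
  calc star (c * q₁ + d) * (1 - (star (c * q₁ + d))⁻¹ * star (a * q₁ + b) *
        ((a * q₂ + b) * (c * q₂ + d)⁻¹)) * (c * q₂ + d)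
      = star (c * q₁ + d) * (c * q₂ + d) - star (c * q₁ + d) * (star (c * q₁ + d))⁻¹ *
          star (a * q₁ + b) * (a * q₂ + b) * ((c * q₂ + d)⁻¹ * (c * q₂ + d)) := by noncomm_ring
    _ = star (c * q₁ + d) * (c * q₂ + d) - star (a * q₁ + b) * (a * q₂ + b) := by
      rw [mul_inv_cancel₀ (star_ne_zero.2 h₁), inv_mul_cancel₀ h₂, one_mul, mul_one]

lemma norm_mul_norm_one_sub_star_moebius_mul_moebius_mul_norm (hA : IsSp11 a b c d)
    {q₁ q₂ : ℍ[ℝ]} (h₁ : c * q₁ + d ≠ 0) (h₂ : c * q₂ + d ≠ 0) :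
    ‖c * q₁ + d‖ * ‖1 - star (moebius a b c d q₁) * moebius a b c d q₂‖ * ‖c * q₂ + d‖ =
      ‖1 - star q₁ * q₂‖ := by
  simpa only [norm_mul, norm_star] using
    congrArg norm (hA.star_mul_one_sub_star_moebius_mul_moebius_mul h₁ h₂)

lemma one_sub_norm_sq_moebius_mul (hA : IsSp11 a b c d) {q : ℍ[ℝ]} (h : c * q + d ≠ 0) :
    (1 - ‖moebius a b c d q‖ ^ 2) * ‖c * q + d‖ ^ 2 = 1 - ‖q‖ ^ 2 := by
  have key := hA.star_mul_one_sub_star_moebius_mul_moebius_mul h h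
  rw [star_mul_self_eq_coe, star_mul_self_eq_coe, ← coe_one, ← coe_sub, ← coe_sub,
    ← coe_commutes, mul_assoc, star_mul_self_eq_coe, ← coe_mul] at key
  exact coe_injective key

lemma norm_moebius_lt_one (hA : IsSp11 a b c d) {q : ℍ[ℝ]} (hq : ‖q‖ < 1) :
    ‖moebius a b c d q‖ < 1 := by
  have h := hA.one_sub_norm_sq_moebius_mul (hA.mul_add_ne_zero hq)
  have hq' : 0 < 1 - ‖q‖ ^ 2 := by nlinarith [norm_nonneg q]
  rw [← h] at hq'
  have := pos_of_mul_pos_left hq' (sq_nonneg _)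
  nlinarith [norm_nonneg (moebius a b c d q)]

lemma rhoH_moebius (hA : IsSp11 a b c d) {q₁ q₂ : ℍ[ℝ]} (hq₁ : ‖q₁‖ < 1) (hq₂ : ‖q₂‖ < 1) :
    rhoH (moebius a b c d q₁) (moebius a b c d q₂) = rhoH q₁ q₂ := by
  have ht₁ := hA.mul_add_ne_zero hq₁
  have ht₂ := hA.mul_add_ne_zero hq₂
  rw [← sq_eq_sq₀ (rhoH_nonneg _ _) (rhoH_nonneg _ _),
    rhoH_sq (one_sub_star_mul_ne_zero (hA.norm_moebius_lt_one hq₁) (hA.norm_moebius_lt_one hq₂)),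
    rhoH_sq (one_sub_star_mul_ne_zero hq₁ hq₂),
    ← hA.norm_mul_norm_one_sub_star_moebius_mul_moebius_mul_norm ht₁ ht₂,
    ← hA.one_sub_norm_sq_moebius_mul ht₁, ← hA.one_sub_norm_sq_moebius_mul ht₂]
  have : ‖c * q₁ + d‖ ≠ 0 := norm_ne_zero_iff.2 ht₁
  have : ‖c * q₂ + d‖ ≠ 0 := norm_ne_zero_iff.2 ht₂
  field_simp

end IsSp11

/-- The quaternionic Poincaré distance on `Δ_ℍ` is invariant under all Möbius
transformations (induced by `Sp(1,1)`) and under quaternionic conjugation. -/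
theorem deltaH_invariant_under_moebius_and_conj (a b c d : ℍ[ℝ])
    (hA : (!![a, b; c, d]).conjTranspose * !![(1 : ℍ[ℝ]), 0; 0, -1] * !![a, b; c, d] =
      !![(1 : ℍ[ℝ]), 0; 0, -1])
    (q₁ q₂ : ℍ[ℝ]) (h₁ : ‖q₁‖ < 1) (h₂ : ‖q₂‖ < 1) :
    (c * q₁ + d ≠ 0 ∧ c * q₂ + d ≠ 0) ∧
    ‖(a * q₁ + b) * (c * q₁ + d)⁻¹‖ < 1 ∧ ‖(a * q₂ + b) * (c * q₂ + d)⁻¹‖ < 1 ∧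
    deltaH ((a * q₁ + b) * (c * q₁ + d)⁻¹) ((a * q₂ + b) * (c * q₂ + d)⁻¹) =
      deltaH q₁ q₂ ∧
    deltaH (star q₁) (star q₂) = deltaH q₁ q₂ := by
  have hSp := IsSp11.of_conjTranspose_mul_mul hA
  refine ⟨⟨hSp.mul_add_ne_zero h₁, hSp.mul_add_ne_zero h₂⟩, hSp.norm_moebius_lt_one h₁,
    hSp.norm_moebius_lt_one h₂, ?_, ?_⟩
  · rw [deltaH, deltaH, ← moebius, ← moebius, hSp.rhoH_moebius h₁ h₂]
  · rw [deltaH, deltaH, rhoH_star]
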